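/- arXiv:1109.0141 — 2 statements merged into one kernel-verified Lean document; each statement's English description precedes it below -/
import Mathlib

section
/- Let p_1 ≥ p_2 ≥ ... ≥ p_n ≥ 0 with ∑ p_i = 1, and let X_1,...,X_n be i.i.d. with CDF F. Then for all x ∈ ℝ, ∑_{i=1}^n p_i F_{n-i+1:n}(x) ≤ F(x) ≤ ∑_{i=1}^n p_i F_{i:n}(x). -/
/-!
Sorting each sample only permutes the values, so for every `ω` as many order statistics as
samples lie below `x`; integrating, `∑ᵢ F_{i:n}(x) = n F(x)`. The order statistics increase in `i`,
so `i ↦ F_{i:n}(x)` is antitone, while `i ↦ F_{n-i+1:n}(x)` is monotone. Chebyshev's sum inequality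
against the decreasing weights `p` then places the mean `F(x)` between the two mixtures.
-/

open MeasureTheory ProbabilityTheory Finset

/-- The `i`-th order statistic (0-indexed) of the values `X 0 ω, ..., X (n-1) ω`. -/
noncomputable def orderStat {Ω : Type*} {n : ℕ} (X : Fin n → Ω → ℝ) (i : Fin n) (ω : Ω) : ℝ :=
  X (Tuple.sort (fun j => X j ω) i) ω

section Chebyshev

variable {ι : Type*} [Fintype ι] {p a : ι → ℝ}

theorem Monovary.sum_div_card_le_sum_mul (h : Monovary p a) (hp : ∑ i, p i = 1) :
    (∑ i, a i) / Fintype.card ι ≤ ∑ i, p i * a i := by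
  obtain ⟨i, -, -⟩ := exists_ne_zero_of_sum_ne_zero (hp ▸ one_ne_zero : ∑ i, p i ≠ 0)
  have hcard : (0 : ℝ) < Fintype.card ι := Nat.cast_pos.2 (Fintype.card_pos_iff.2 ⟨i⟩)
  rw [div_le_iff₀' hcard]
  simpa [hp] using h.sum_mul_sum_le_card_mul_sum

theorem Antivary.sum_mul_le_sum_div_card (h : Antivary p a) (hp : ∑ i, p i = 1) :
    ∑ i, p i * a i ≤ (∑ i, a i) / Fintype.card ι := by
  have := h.neg_right.sum_div_card_le_sum_mul hp
  simpa only [Pi.neg_apply, mul_neg, sum_neg_distrib, neg_div, neg_le_neg_iff] using this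

end Chebyshev

theorem Tuple.apply_sort_le_iff_lt_card {n : ℕ} {α : Type*} [LinearOrder α]
    (f : Fin n → α) (i : Fin n) (a : α) :
    f (sort f i) ≤ a ↔ (i : ℕ) < #{j | f j ≤ a} := by
  have h := lt_card_le_iff_apply_le_of_monotone (j := i) (a := a) (monotone_sort f)
  rwa [card_equiv (sort f) (t := {j | f j ≤ a}) (by simp), Iff.comm] at h

theorem MeasureTheory.sum_measure_eq_of_perm {Ω ι : Type*} [MeasurableSpace Ω] [Fintype ι]
    (μ : Measure Ω) {A B : ι → Set Ω} (hA : ∀ i, MeasurableSet (A i))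
    (hB : ∀ i, MeasurableSet (B i)) (σ : Ω → Equiv.Perm ι)
    (hAB : ∀ ω i, ω ∈ A i ↔ ω ∈ B (σ ω i)) :
    ∑ i, μ (A i) = ∑ i, μ (B i) := by
  simp_rw [← lintegral_indicator_one (hA _), ← lintegral_indicator_one (hB _)]
  rw [← lintegral_finsetSum (f := fun i => (A i).indicator 1) _
      fun i _ => measurable_const.indicator (hA i),
    ← lintegral_finsetSum (f := fun i => (B i).indicator 1) _
      fun i _ => measurable_const.indicator (hB i)]
  refine lintegral_congr fun ω => Fintype.sum_equiv (σ ω) _ _ fun i => ?_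
  classical
  unfold Set.indicator
  exact if_congr (hAB ω i) rfl rfl

section OrderStat

variable {Ω : Type*} {n : ℕ} (X : Fin n → Ω → ℝ)

theorem orderStat_mono (ω : Ω) : Monotone (orderStat X · ω) :=
  Tuple.monotone_sort (X · ω)

variable [MeasurableSpace Ω] {X}

theorem measurable_orderStat (hX : ∀ j, Measurable (X j)) (i : Fin n) :
    Measurable (orderStat X i) := by
  refine measurable_of_Iic fun x => ?_
  have hcount : Measurable fun ω => #{j | X j ω ≤ x} := by
    simp_rw [card_filter]
    exact Finset.measurable_sum _ fun j _ =>
      Measurable.ite (measurableSet_le (hX j) measurable_const) measurable_const measurable_const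
  have hset : orderStat X i ⁻¹' Set.Iic x = {ω | (i : ℕ) < #{j | X j ω ≤ x}} :=
    Set.ext fun ω => Tuple.apply_sort_le_iff_lt_card (X · ω) i x
  exact hset ▸ measurableSet_lt measurable_const hcount

theorem sum_measure_orderStat_le (μ : Measure Ω) (hX : ∀ j, Measurable (X j)) (x : ℝ) :
    ∑ i, μ {ω | orderStat X i ω ≤ x} = ∑ j, μ {ω | X j ω ≤ x} :=
  sum_measure_eq_of_perm μ (fun i => measurableSet_le (measurable_orderStat hX i) measurable_const)
    (fun j => measurableSet_le (hX j) measurable_const) (fun ω => Tuple.sort (X · ω))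
    fun _ _ => Iff.rfl

end OrderStat

theorem orderStat_mixture_bounds_general {Ω : Type*} [MeasurableSpace Ω]
    (μ : Measure Ω) [IsProbabilityMeasure μ] (n : ℕ)
    (X : Fin n → Ω → ℝ) (hmeas : ∀ i, Measurable (X i))
    (F : ℝ → ℝ) (hF : ∀ i x, (μ {ω | X i ω ≤ x}).toReal = F x)
    (p : Fin n → ℝ)
    (hpdec : ∀ i j : Fin n, i ≤ j → p j ≤ p i)
    (hpsum : ∑ i : Fin n, p i = 1) :
    ∀ x : ℝ,
      (∑ i : Fin n, p i * (μ {ω | orderStat X i.rev ω ≤ x}).toReal) ≤ F x ∧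
      F x ≤ ∑ i : Fin n, p i * (μ {ω | orderStat X i ω ≤ x}).toReal := by
  intro x
  have hn : n ≠ 0 := by rintro rfl; simp at hpsum
  let a : Fin n → ℝ := fun i => (μ {ω | orderStat X i ω ≤ x}).toReal
  have ha : Antitone a := fun i j hij => ENNReal.toReal_mono (measure_ne_top _ _)
    (measure_mono fun ω hω => (orderStat_mono X ω hij).trans hω)
  have ha_mean : (∑ i, a i) / Fintype.card (Fin n) = F x := by
    rw [← ENNReal.toReal_sum fun _ _ => measure_ne_top _ _, sum_measure_orderStat_le μ hmeas x,
      ENNReal.toReal_sum fun _ _ => measure_ne_top _ _]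
    simp [hF, hn]
  have hp : Antitone p := hpdec
  constructor
  · have h := (hp.antivary (ha.comp Fin.rev_anti)).sum_mul_le_sum_div_card hpsum
    rwa [Fintype.sum_equiv Fin.revPerm (a ∘ Fin.rev) a fun _ => rfl, ha_mean] at h
  · exact ha_mean ▸ (hp.monovary ha).sum_div_card_le_sum_mul hpsum

/-- Lemma 1: for a decreasing probability vector `p`,
`∑ pᵢ F_{n-i+1:n}(x) ≤ F(x) ≤ ∑ pᵢ F_{i:n}(x)`. -/
theorem orderStat_mixture_bounds {Ω : Type*} [MeasurableSpace Ω]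
    (μ : Measure Ω) [IsProbabilityMeasure μ] (n : ℕ) (hn : 0 < n)
    (X : Fin n → Ω → ℝ) (hmeas : ∀ i, Measurable (X i))
    (hindep : iIndepFun X μ)
    (F : ℝ → ℝ) (hF : ∀ i x, (μ {ω | X i ω ≤ x}).toReal = F x)
    (p : Fin n → ℝ) (hp0 : ∀ i, 0 ≤ p i)
    (hpdec : ∀ i j : Fin n, i ≤ j → p j ≤ p i)
    (hpsum : ∑ i : Fin n, p i = 1) :
    ∀ x : ℝ,
      (∑ i : Fin n, p i * (μ {ω | orderStat X i.rev ω ≤ x}).toReal) ≤ F x ∧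
      F x ≤ ∑ i : Fin n, p i * (μ {ω | orderStat X i ω ≤ x}).toReal :=
  orderStat_mixture_bounds_general μ n X hmeas F hF p hpdec hpsum
end

section
/- Under the hypotheses of the preceding bound (c_n finite), for every α ∈ (0,1), m^{1−α} · ∫_ℝ |K_n^{(m)}(x) − H_n^{(m)}(x)| dx → 0 as m → ∞; i.e., the L¹ distance between the upper and lower bounds is o(1/m^{1−α}). -/
open MeasureTheory ProbabilityTheory Finset Filter

/-- The weight `p_{i+1}(m) = (m + n − (i+1) + 1)/(nm + n(n+1)/2)` for `i : Fin n` (0-indexed). -/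
noncomputable def weight (n : ℕ) (m : ℕ) (i : Fin n) : ℝ :=
  ((m : ℝ) + n - (i : ℕ)) / (n * m + n * (n + 1) / 2)

/-!
The weights differ from the uniform weight `1/n` by at most `1/m`, and the uniform mixtures of
`F_{i:n}` and of `F_{n-i+1:n}` coincide because reversal permutes the indices. Hence the
integrand is at most `(1/m) ∑ᵢ |F_{i:n} - F_{n-i+1:n}|`, the distance is at most `c_n / m`,
and `m^{1-α} · c_n / m = c_n m^{-α} → 0`.
-/

lemma abs_weight_sub_inv_le {n m : ℕ} (hm : 0 < m) (i : Fin n) :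
    |weight n m i - (n : ℝ)⁻¹| ≤ (m : ℝ)⁻¹ := by
  have hn : (1 : ℝ) ≤ n := by exact_mod_cast i.pos
  have hm_one : (1 : ℝ) ≤ m := by exact_mod_cast hm
  have hi : ((i : ℕ) : ℝ) + 1 ≤ n := by exact_mod_cast i.isLt
  have hD : (0 : ℝ) < n * m + n * (n + 1) / 2 := by positivity
  have hweight : weight n m i - (n : ℝ)⁻¹ =
      ((n : ℝ) - (i : ℕ) - (n + 1) / 2) / (n * m + n * (n + 1) / 2) := by
    unfold weight
    field_simp
    ring
  have hnum : |(n : ℝ) - (i : ℕ) - (n + 1) / 2| ≤ n :=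
    abs_le.mpr ⟨by linarith [Nat.cast_nonneg (α := ℝ) (i : ℕ)], by linarith⟩
  rw [hweight, abs_div, abs_of_pos hD, div_le_iff₀ hD, inv_mul_eq_div, le_div_iff₀ (by linarith)]
  nlinarith

lemma abs_sum_mul_sub_sum_mul_le {ι : Type*} (s : Finset ι) (w a b : ι → ℝ) {c ε : ℝ}
    (hab : ∑ i ∈ s, a i = ∑ i ∈ s, b i) (hw : ∀ i ∈ s, |w i - c| ≤ ε) :
    |∑ i ∈ s, w i * a i - ∑ i ∈ s, w i * b i| ≤ ε * ∑ i ∈ s, |a i - b i| := by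
  -- `c` can be subtracted from the weights because `∑ a = ∑ b`
  have hcenter : ∑ i ∈ s, w i * a i - ∑ i ∈ s, w i * b i =
      ∑ i ∈ s, (w i - c) * (a i - b i) := by
    simp only [sub_mul, mul_sub, sum_sub_distrib, ← mul_sum, hab]
    ring
  rw [hcenter, mul_sum]
  refine (abs_sum_le_sum_abs _ _).trans (sum_le_sum fun i hi => ?_)
  rw [abs_mul]
  exact mul_le_mul_of_nonneg_right (hw i hi) (abs_nonneg _)

lemma integral_abs_sum_mul_sub_perm_le {α ι : Type*} [Fintype ι] [MeasurableSpace α]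
    (μ : Measure α) (w : ι → ℝ) (G : ι → α → ℝ) (σ : Equiv.Perm ι) {c ε : ℝ}
    (hw : ∀ i, |w i - c| ≤ ε) (hint : ∀ i, Integrable (fun x => |G i x - G (σ i) x|) μ) :
    ∫ x, |∑ i, w i * G i x - ∑ i, w i * G (σ i) x| ∂μ ≤
      ε * ∑ i, ∫ x, |G i x - G (σ i) x| ∂μ := by
  have hpointwise : ∀ x, |∑ i, w i * G i x - ∑ i, w i * G (σ i) x| ≤
      ε * ∑ i, |G i x - G (σ i) x| := fun x =>
    abs_sum_mul_sub_sum_mul_le _ w _ _ (σ.sum_comp univ (G · x) (by simp)).symm fun i _ => hw i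
  calc ∫ x, |∑ i, w i * G i x - ∑ i, w i * G (σ i) x| ∂μ
      ≤ ∫ x, ε * ∑ i, |G i x - G (σ i) x| ∂μ :=
        integral_mono_of_nonneg (ae_of_all _ fun x => abs_nonneg _)
          ((integrable_finsetSum _ fun i _ => hint i).const_mul ε) (ae_of_all _ hpointwise)
    _ = ε * ∑ i, ∫ x, |G i x - G (σ i) x| ∂μ := by
        rw [integral_const_mul, integral_finsetSum _ fun i _ => hint i]

lemma tendsto_rpow_one_sub_mul_of_le_inv_mul {f : ℕ → ℝ} {C α : ℝ} (hα : 0 < α)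
    (hf_nonneg : ∀ m, 0 ≤ f m) (hf_le : ∀ᶠ m in atTop, f m ≤ (m : ℝ)⁻¹ * C) :
    Tendsto (fun m : ℕ => (m : ℝ) ^ (1 - α) * f m) atTop (nhds 0) := by
  have hlim : Tendsto (fun m : ℕ => C * (m : ℝ) ^ (-α)) atTop (nhds 0) := by
    simpa using ((tendsto_rpow_neg_atTop hα).comp tendsto_natCast_atTop_atTop).const_mul C
  refine squeeze_zero' (Eventually.of_forall fun m => ?_) ?_ hlim
  · exact mul_nonneg (Real.rpow_nonneg m.cast_nonneg _) (hf_nonneg m)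
  filter_upwards [hf_le, eventually_gt_atTop 0] with m hfm hm
  have hm_pos : (0 : ℝ) < m := by exact_mod_cast hm
  calc (m : ℝ) ^ (1 - α) * f m ≤ (m : ℝ) ^ (1 - α) * ((m : ℝ)⁻¹ * C) :=
        mul_le_mul_of_nonneg_left hfm (Real.rpow_nonneg hm_pos.le _)
    _ = C * (m : ℝ) ^ (-α) := by
        rw [← Real.rpow_neg_one, show -α = (1 - α) + -1 by ring, Real.rpow_add hm_pos]
        ring

theorem orderStat_mixture_L1_little_o_general {Ω : Type*} [MeasurableSpace Ω]
    (μ : Measure Ω) (n : ℕ)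
    (X : Fin n → Ω → ℝ)
    (hint : ∀ i : Fin n, Integrable (fun x : ℝ =>
      |(μ {ω | orderStat X i ω ≤ x}).toReal - (μ {ω | orderStat X i.rev ω ≤ x}).toReal|)) :
    ∀ α : ℝ, 0 < α → α < 1 →
      Tendsto (fun m : ℕ => (m : ℝ) ^ ((1 : ℝ) - α) *
        ∫ x : ℝ, |(∑ i : Fin n, weight n m i * (μ {ω | orderStat X i ω ≤ x}).toReal) -
          ∑ i : Fin n, weight n m i * (μ {ω | orderStat X i.rev ω ≤ x}).toReal|)
        atTop (nhds 0) := by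
  intro α hα _
  set G : Fin n → ℝ → ℝ := fun i x => (μ {ω | orderStat X i ω ≤ x}).toReal
  refine tendsto_rpow_one_sub_mul_of_le_inv_mul (C := ∑ i, ∫ x, |G i x - G i.rev x|) hα
    (fun m => integral_nonneg fun x => abs_nonneg _) ?_
  filter_upwards [eventually_gt_atTop 0] with m hm
  exact integral_abs_sum_mul_sub_perm_le volume (weight n m) G Fin.revPerm
    (abs_weight_sub_inv_le hm) hint

/-- Theorem 1, (5): the L¹ distance between the bounds is `o(1/m^{1−α})` for every
`α ∈ (0,1)`. -/
theorem orderStat_mixture_L1_little_o {Ω : Type*} [MeasurableSpace Ω]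
    (μ : Measure Ω) [IsProbabilityMeasure μ] (n : ℕ) (hn : 0 < n)
    (X : Fin n → Ω → ℝ) (hmeas : ∀ i, Measurable (X i))
    (hindep : iIndepFun X μ)
    (F : ℝ → ℝ) (hF : ∀ i x, (μ {ω | X i ω ≤ x}).toReal = F x)
    (hint : ∀ i : Fin n, Integrable (fun x : ℝ =>
      |(μ {ω | orderStat X i ω ≤ x}).toReal - (μ {ω | orderStat X i.rev ω ≤ x}).toReal|)) :
    ∀ α : ℝ, 0 < α → α < 1 →
      Tendsto (fun m : ℕ => (m : ℝ) ^ ((1 : ℝ) - α) *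
        ∫ x : ℝ, |(∑ i : Fin n, weight n m i * (μ {ω | orderStat X i ω ≤ x}).toReal) -
          ∑ i : Fin n, weight n m i * (μ {ω | orderStat X i.rev ω ≤ x}).toReal|)
        atTop (nhds 0) :=
  orderStat_mixture_L1_little_o_general μ n X hint
end
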